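/- arXiv:2508.20639 — 9 statements merged into one kernel-verified Lean document; each statement's English description precedes it below -/
import Mathlib

section
/- Let n ≥ 1 be a natural number. The set of real solutions (x₁, x₂, c) of the Einstein system for A(n,n) is exactly {(1, 1, 0), (−1, −1, 0)}; in particular every solution has c = 0 (is Ricci flat). -/
/-- The set of real solutions (x₁, x₂, c) of the Einstein system for A(n,n), n ≥ 1,
is exactly {(1, 1, 0), (−1, −1, 0)}; in particular every solution is Ricci flat. -/
theorem einstein_Ann_solutions (n : ℕ) (hn : 1 ≤ n) :
    ∀ x₁ x₂ c : ℝ,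
      ((1/4) * (x₁^2 - 1) = c * x₁ ∧
       (1/4) * (x₂^2 - 1) = -c * x₂ ∧
       ((n : ℝ) * ((n : ℝ) + 2) / (4 * ((n : ℝ) + 1)^2)) * (x₁ - x₂) = c)
      ↔ ((x₁, x₂, c) = (1, 1, 0) ∨ (x₁, x₂, c) = (-1, -1, 0)) := by
  intro x₁ x₂ c
  have hm : (1 : ℝ) ≤ (n : ℝ) := by exact_mod_cast hn
  set m : ℝ := (n : ℝ) with hmdef
  have hden : 4 * (m + 1)^2 > 0 := by positivity
  constructor
  · rintro ⟨h1, h2, h3⟩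
    -- clear the denominator in h3
    have h3' : m * (m + 2) * (x₁ - x₂) = c * (4 * (m + 1)^2) := by
      field_simp at h3
      linarith [h3]
    -- from h1 - h2 : (x₁+x₂)*((x₁-x₂)/4 - c) = 0
    have key : (x₁ + x₂) * ((x₁ - x₂) - 4 * c) = 0 := by nlinarith [h1, h2]
    rcases mul_eq_zero.mp key with hs | hd
    · -- x₂ = -x₁ : contradiction
      exfalso
      have hx2 : x₂ = -x₁ := by linarith
      subst hx2
      have e2 : (x₁^2 - 1)*(m+1)^2 = x₁^2 * (2*m*(m+2)) := by
        linear_combination (4*(m+1)^2) * h1 - x₁ * h3'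
      have hmsq : 1 ≤ m^2 := by nlinarith
      nlinarith [e2, mul_nonneg (sq_nonneg x₁) (sub_nonneg.mpr hmsq), hden]
    · -- x₁ - x₂ = 4c
      have hfac : (m + 1)^2 - m * (m + 2) = 1 := by ring
      have hc0 : c = 0 := by nlinarith [h3', hd]
      have hd0 : x₁ = x₂ := by nlinarith [h3', hc0, hden]
      subst hd0
      subst hc0
      have : (x₁ - 1) * (x₁ + 1) = 0 := by nlinarith [h1]
      rcases mul_eq_zero.mp this with h | h
      · left; have : x₁ = 1 := by linarith
        simp [this]
      · right; have : x₁ = -1 := by linarith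
        simp [this]
  · rintro (h | h) <;> simp only [Prod.mk.injEq] at h <;>
      obtain ⟨a, b, c'⟩ := h <;> subst a <;> subst b <;> subst c' <;>
      refine ⟨by norm_num, by norm_num, by norm_num⟩
end

section
/- Let m ≥ 1 and n ≥ 1 be integers, and set A = 2(2m³ + (−4n+1)m² + n(4n−1)m − 2n³), B = −2(6m³ − (12n+1)m² + (8n² − n − 2)m − 2n³ + n), C = (2m−1)(6m² − (10n+1)m + 4n² − n − 1), D = (2m−1)²(n−m). Then for real numbers x₁, x₂, c with x₁ ≠ 0 and x₂ ≠ 0, the triple (x₁, x₂, c) solves the Einstein system for B(m,n) if and only if c = (2n·x₁² − 2m + 1)/(4(2m−2n−1)·x₁), x₂ = (2(m−n)·x₁² − 2(2m−2n−1)·x₁ + 2m − 1)/((2n+1)·x₁), and (x₁ − 1)·(A·x₁³ + B·x₁² + C·x₁ + D) = 0. -/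
/-!
Equation (i) is linear in `c` and, once `c` is known, equation (iii) is linear in `x₂`; their
coefficients `(2m - 2n - 1) x₁` and `(2n + 1)` never vanish, since `2m - 2n - 1` is odd.
Substituting the resulting expressions for `c` and `x₂` into equation (ii) and clearing the
denominator `4 (n + 1) (2n + 1)² x₁²` leaves exactly the quartic `(x₁ - 1)(A x₁³ + B x₁² + C x₁ + D)`.
-/

theorem two_mul_sub_two_mul_sub_one_ne_zero (m n : ℕ) : (2 * m - 2 * n - 1 : ℝ) ≠ 0 := by
  have hodd : (2 * m - 2 * n - 1 : ℤ) ≠ 0 := by omega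
  exact_mod_cast hodd

def einsteinQuartic (m n x : ℝ) : ℝ :=
  (x - 1) * (2 * (2 * m^3 + (-4 * n + 1) * m^2 + n * (4 * n - 1) * m - 2 * n^3) * x^3
    + -2 * (6 * m^3 - (12 * n + 1) * m^2 + (8 * n^2 - n - 2) * m - 2 * n^3 + n) * x^2
    + (2 * m - 1) * (6 * m^2 - (10 * n + 1) * m + 4 * n^2 - n - 1) * x
    + (2 * m - 1)^2 * (n - m))

section EinsteinEquations

variable {m n x₁ x₂ c : ℝ}

theorem einstein_eq_one_iff (hm : 2 * m - 1 ≠ 0) (hd : 2 * m - 2 * n - 1 ≠ 0) (hx₁ : x₁ ≠ 0) :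
    (1/4) * ((2 * n / (2 * m - 1)) * x₁^2 - 1) = c * (1 - 2 * n / (2 * m - 1)) * x₁ ↔
      c = (2 * n * x₁^2 - 2 * m + 1) / (4 * (2 * m - 2 * n - 1) * x₁) := by
  rw [eq_div_iff (by positivity)]
  field_simp
  constructor <;> intro h <;> linarith

theorem einstein_eq_three_iff (hd : 2 * m - 2 * n - 1 ≠ 0) (hn : 2 * n + 1 ≠ 0) (hx₁ : x₁ ≠ 0)
    (hc : c = (2 * n * x₁^2 - 2 * m + 1) / (4 * (2 * m - 2 * n - 1) * x₁)) :
    (m / (2 * m - 2 * n - 1)) * x₁ - ((2 * n + 1) / (2 * (2 * m - 2 * n - 1))) * x₂ = 2 * c + 1 ↔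
      x₂ = (2 * (m - n) * x₁^2 - 2 * (2 * m - 2 * n - 1) * x₁ + 2 * m - 1)
        / ((2 * n + 1) * x₁) := by
  -- `field_simp` normalises `2 * m - 2 * n - 1` to this form
  have hd' : 2 * (m - n) - 1 ≠ 0 := by rwa [mul_sub]
  subst hc
  rw [eq_div_iff (by positivity)]
  field_simp
  constructor <;> intro h <;> linarith

theorem einstein_eq_two_iff (hd : 2 * m - 2 * n - 1 ≠ 0) (hn₁ : 2 * n + 1 ≠ 0) (hn₂ : n + 1 ≠ 0)
    (hx₁ : x₁ ≠ 0) (hc : c = (2 * n * x₁^2 - 2 * m + 1) / (4 * (2 * m - 2 * n - 1) * x₁))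
    (hx₂ : x₂ = (2 * (m - n) * x₁^2 - 2 * (2 * m - 2 * n - 1) * x₁ + 2 * m - 1)
      / ((2 * n + 1) * x₁)) :
    (1/4) * (((2 * m + 1) / (2 * n + 2)) * x₂^2 - 1) = c * (1 - (2 * m + 1) / (2 * n + 2)) * x₂ ↔
      einsteinQuartic m n x₁ = 0 := by
  have hd' : 2 * (m - n) - 1 ≠ 0 := by rwa [mul_sub]
  have hdiff : (1/4) * (((2 * m + 1) / (2 * n + 2)) * x₂^2 - 1)
      - c * (1 - (2 * m + 1) / (2 * n + 2)) * x₂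
      = einsteinQuartic m n x₁ / (4 * (n + 1) * (2 * n + 1)^2 * x₁^2) := by
    subst hc hx₂
    unfold einsteinQuartic
    field_simp
    ring
  rw [← sub_eq_zero, hdiff, div_eq_zero_iff, or_iff_left (by positivity)]

end EinsteinEquations

theorem einstein_Bmn_reduction_general (m n : ℕ) (hm : 1 ≤ m)
    (A B C D : ℝ)
    (hA : A = 2 * (2 * (m : ℝ)^3 + (-4 * (n : ℝ) + 1) * (m : ℝ)^2
      + (n : ℝ) * (4 * (n : ℝ) - 1) * (m : ℝ) - 2 * (n : ℝ)^3))
    (hB : B = -2 * (6 * (m : ℝ)^3 - (12 * (n : ℝ) + 1) * (m : ℝ)^2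
      + (8 * (n : ℝ)^2 - (n : ℝ) - 2) * (m : ℝ) - 2 * (n : ℝ)^3 + (n : ℝ)))
    (hC : C = (2 * (m : ℝ) - 1) * (6 * (m : ℝ)^2 - (10 * (n : ℝ) + 1) * (m : ℝ)
      + 4 * (n : ℝ)^2 - (n : ℝ) - 1))
    (hD : D = (2 * (m : ℝ) - 1)^2 * ((n : ℝ) - (m : ℝ))) :
    ∀ x₁ x₂ c : ℝ, x₁ ≠ 0 → x₂ ≠ 0 →
      (((1/4) * ((2 * (n : ℝ) / (2 * (m : ℝ) - 1)) * x₁^2 - 1)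
          = c * (1 - 2 * (n : ℝ) / (2 * (m : ℝ) - 1)) * x₁ ∧
        (1/4) * (((2 * (m : ℝ) + 1) / (2 * (n : ℝ) + 2)) * x₂^2 - 1)
          = c * (1 - (2 * (m : ℝ) + 1) / (2 * (n : ℝ) + 2)) * x₂ ∧
        ((m : ℝ) / (2 * (m : ℝ) - 2 * (n : ℝ) - 1)) * x₁
          - ((2 * (n : ℝ) + 1) / (2 * (2 * (m : ℝ) - 2 * (n : ℝ) - 1))) * x₂
          = 2 * c + 1)
      ↔ (c = (2 * (n : ℝ) * x₁^2 - 2 * (m : ℝ) + 1)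
            / (4 * (2 * (m : ℝ) - 2 * (n : ℝ) - 1) * x₁) ∧
         x₂ = (2 * ((m : ℝ) - (n : ℝ)) * x₁^2
            - 2 * (2 * (m : ℝ) - 2 * (n : ℝ) - 1) * x₁ + 2 * (m : ℝ) - 1)
            / ((2 * (n : ℝ) + 1) * x₁) ∧
         (x₁ - 1) * (A * x₁^3 + B * x₁^2 + C * x₁ + D) = 0)) := by
  intro x₁ x₂ c hx₁ _
  subst hA hB hC hD
  have hm₁ : 2 * (m : ℝ) - 1 ≠ 0 := by
    have : (1 : ℝ) ≤ m := by exact_mod_cast hm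
    linarith
  have hd := two_mul_sub_two_mul_sub_one_ne_zero m n
  have hn₁ : 2 * (n : ℝ) + 1 ≠ 0 := by positivity
  have hn₂ : (n : ℝ) + 1 ≠ 0 := by positivity
  rw [einstein_eq_one_iff hm₁ hd hx₁]
  constructor
  · rintro ⟨hc, h₂, h₃⟩
    have hx₂ := (einstein_eq_three_iff hd hn₁ hx₁ hc).1 h₃
    exact ⟨hc, hx₂, (einstein_eq_two_iff hd hn₁ hn₂ hx₁ hc hx₂).1 h₂⟩
  · rintro ⟨hc, hx₂, hq⟩
    exact ⟨hc, (einstein_eq_two_iff hd hn₁ hn₂ hx₁ hc hx₂).2 hq,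
      (einstein_eq_three_iff hd hn₁ hx₁ hc).2 hx₂⟩

/-- For m, n ≥ 1 and x₁ ≠ 0, x₂ ≠ 0, the triple (x₁, x₂, c) solves the Einstein
system for B(m,n) iff c and x₂ are given by the stated rational expressions in x₁ and
x₁ satisfies the quartic equation (x₁ − 1)(A x₁³ + B x₁² + C x₁ + D) = 0. -/
theorem einstein_Bmn_reduction (m n : ℕ) (hm : 1 ≤ m) (hn : 1 ≤ n)
    (A B C D : ℝ)
    (hA : A = 2 * (2 * (m : ℝ)^3 + (-4 * (n : ℝ) + 1) * (m : ℝ)^2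
      + (n : ℝ) * (4 * (n : ℝ) - 1) * (m : ℝ) - 2 * (n : ℝ)^3))
    (hB : B = -2 * (6 * (m : ℝ)^3 - (12 * (n : ℝ) + 1) * (m : ℝ)^2
      + (8 * (n : ℝ)^2 - (n : ℝ) - 2) * (m : ℝ) - 2 * (n : ℝ)^3 + (n : ℝ)))
    (hC : C = (2 * (m : ℝ) - 1) * (6 * (m : ℝ)^2 - (10 * (n : ℝ) + 1) * (m : ℝ)
      + 4 * (n : ℝ)^2 - (n : ℝ) - 1))
    (hD : D = (2 * (m : ℝ) - 1)^2 * ((n : ℝ) - (m : ℝ))) :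
    ∀ x₁ x₂ c : ℝ, x₁ ≠ 0 → x₂ ≠ 0 →
      (((1/4) * ((2 * (n : ℝ) / (2 * (m : ℝ) - 1)) * x₁^2 - 1)
          = c * (1 - 2 * (n : ℝ) / (2 * (m : ℝ) - 1)) * x₁ ∧
        (1/4) * (((2 * (m : ℝ) + 1) / (2 * (n : ℝ) + 2)) * x₂^2 - 1)
          = c * (1 - (2 * (m : ℝ) + 1) / (2 * (n : ℝ) + 2)) * x₂ ∧
        ((m : ℝ) / (2 * (m : ℝ) - 2 * (n : ℝ) - 1)) * x₁
          - ((2 * (n : ℝ) + 1) / (2 * (2 * (m : ℝ) - 2 * (n : ℝ) - 1))) * x₂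
          = 2 * c + 1)
      ↔ (c = (2 * (n : ℝ) * x₁^2 - 2 * (m : ℝ) + 1)
            / (4 * (2 * (m : ℝ) - 2 * (n : ℝ) - 1) * x₁) ∧
         x₂ = (2 * ((m : ℝ) - (n : ℝ)) * x₁^2
            - 2 * (2 * (m : ℝ) - 2 * (n : ℝ) - 1) * x₁ + 2 * (m : ℝ) - 1)
            / ((2 * (n : ℝ) + 1) * x₁) ∧
         (x₁ - 1) * (A * x₁^3 + B * x₁^2 + C * x₁ + D) = 0)) :=
  einstein_Bmn_reduction_general m n hm A B C D hA hB hC hD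
end

section
/- Let n ≥ 3 be an integer. The set of real solutions (x₀, x₁, c) of the Einstein system for C(n) with x₀ ≠ 0 and x₁ ≠ 0 is exactly the two-element set consisting of (1, 1, −1/4) and ((4n³ − 20n² + 33n − 16)/(4n³ − 16n² + 23n − 12), (2n² − 3n)/(2n² − 5n + 4), (−4n³ + 20n² − 33n + 16)/(4(4n³ − 16n² + 23n − 12))). -/
/-!
Substituting `c = -x₀ / 4` into the other two equations and clearing denominators gives
`x₁² + (n - 1) x₀ x₁ = n` and `(2n - 3) x₀ + (2n - 1) x₁ = 4 (n - 1)`. The second is linear in `x₀`;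
eliminating `x₀` from the first leaves `(x₁ - 1) ((2n² - 5n + 4) x₁ - n (2n - 3)) = 0`, and the
second then determines `x₀`. The denominator `4n³ - 16n² + 23n - 12` is `(2n - 3)(2n² - 5n + 4)`.
-/

namespace EinsteinCn

def System (N x₀ x₁ c : ℝ) : Prop :=
  c = -x₀ / 4 ∧
    (1/4) * ((1 / N) * x₁^2 - 1) = c * (1 - 1 / N) * x₁ ∧
    -x₀ / (4 * (N - 1)) + ((2 * N - 1) / (4 * (N - 1))) * x₁ = 2 * c + 1

noncomputable def solution (N : ℝ) : ℝ × ℝ × ℝ :=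
  ((4 * N^3 - 20 * N^2 + 33 * N - 16) / (4 * N^3 - 16 * N^2 + 23 * N - 12),
    (2 * N^2 - 3 * N) / (2 * N^2 - 5 * N + 4),
    (-4 * N^3 + 20 * N^2 - 33 * N + 16) / (4 * (4 * N^3 - 16 * N^2 + 23 * N - 12)))

variable {N x₀ x₁ c : ℝ}

lemma denom_snd_pos (N : ℝ) : 0 < 2 * N^2 - 5 * N + 4 := by
  nlinarith [sq_nonneg (4 * N - 5)]

lemma denom_fst_ne_zero (h23 : 2 * N - 3 ≠ 0) : 4 * N^3 - 16 * N^2 + 23 * N - 12 ≠ 0 := by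
  rw [show 4 * N^3 - 16 * N^2 + 23 * N - 12 = (2 * N - 3) * (2 * N^2 - 5 * N + 4) by ring]
  exact mul_ne_zero h23 (denom_snd_pos N).ne'

lemma numer_fst_pos (hN : 1 ≤ N) : 0 < 4 * N^3 - 20 * N^2 + 33 * N - 16 := by
  nlinarith [mul_nonneg (sub_nonneg.2 hN) (sq_nonneg (N - 2))]

lemma system_iff_polynomial (hN0 : N ≠ 0) (hN1 : N - 1 ≠ 0) :
    System N x₀ x₁ c ↔
      c = -x₀ / 4 ∧ x₁^2 + (N - 1) * x₀ * x₁ = N ∧ (2 * N - 3) * x₀ + (2 * N - 1) * x₁ = 4 * (N - 1) := by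
  refine and_congr_right fun hc => ?_
  subst hc
  refine and_congr ?_ ?_ <;> field_simp <;> constructor <;> intro h <;> linear_combination h

lemma polynomial_iff_triangular (h23 : 2 * N - 3 ≠ 0) :
    (x₁^2 + (N - 1) * x₀ * x₁ = N ∧ (2 * N - 3) * x₀ + (2 * N - 1) * x₁ = 4 * (N - 1)) ↔
      ((x₁ - 1) * ((2 * N^2 - 5 * N + 4) * x₁ - (2 * N^2 - 3 * N)) = 0 ∧
        (2 * N - 3) * x₀ + (2 * N - 1) * x₁ = 4 * (N - 1)) := by
  refine and_congr_left fun h₃ => ⟨fun h₂ => ?_, fun h => mul_left_cancel₀ h23 ?_⟩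
  · linear_combination (3 - 2 * N) * h₂ + ((N - 1) * x₁) * h₃
  · linear_combination -h + ((N - 1) * x₁) * h₃

lemma triangular_iff (h23 : 2 * N - 3 ≠ 0) :
    ((x₁ - 1) * ((2 * N^2 - 5 * N + 4) * x₁ - (2 * N^2 - 3 * N)) = 0 ∧
        (2 * N - 3) * x₀ + (2 * N - 1) * x₁ = 4 * (N - 1)) ↔
      (x₀ = 1 ∧ x₁ = 1) ∨
        (x₀ = (4 * N^3 - 20 * N^2 + 33 * N - 16) / (4 * N^3 - 16 * N^2 + 23 * N - 12) ∧
          x₁ = (2 * N^2 - 3 * N) / (2 * N^2 - 5 * N + 4)) := by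
  have hq := (denom_snd_pos N).ne'
  rw [eq_div_iff (denom_fst_ne_zero h23), eq_div_iff hq]
  constructor
  · rintro ⟨h, h₃⟩
    rcases mul_eq_zero.mp h with h | h
    · obtain rfl : x₁ = 1 := by linear_combination h
      exact .inl ⟨mul_left_cancel₀ h23 (by linear_combination h₃), rfl⟩
    · refine .inr ⟨?_, by linear_combination h⟩
      linear_combination (2 * N^2 - 5 * N + 4) * h₃ - (2 * N - 1) * h
  · rintro (⟨rfl, rfl⟩ | ⟨hx₀, hx₁⟩)
    · constructor <;> ring
    · refine ⟨by linear_combination (x₁ - 1) * hx₁, mul_left_cancel₀ hq ?_⟩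
      linear_combination hx₀ + (2 * N - 1) * hx₁

lemma system_iff (hN0 : N ≠ 0) (hN1 : N - 1 ≠ 0) (h23 : 2 * N - 3 ≠ 0) :
    System N x₀ x₁ c ↔ (x₀, x₁, c) = (1, 1, -1/4) ∨ (x₀, x₁, c) = solution N := by
  rw [system_iff_polynomial hN0 hN1, polynomial_iff_triangular h23, triangular_iff h23]
  simp only [solution, Prod.mk.injEq]
  constructor
  · rintro ⟨rfl, ⟨rfl, rfl⟩ | ⟨rfl, rfl⟩⟩
    · norm_num
    · refine .inr ⟨rfl, rfl, ?_⟩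
      field_simp
      ring
  · rintro (⟨rfl, rfl, rfl⟩ | ⟨rfl, rfl, rfl⟩)
    · norm_num
    · refine ⟨?_, .inr ⟨rfl, rfl⟩⟩
      field_simp
      ring

lemma one_ne_solution (hN2 : N ≠ 2) : ((1, 1, -1/4) : ℝ × ℝ × ℝ) ≠ solution N := by
  intro h
  have hx₁ : 1 = (2 * N^2 - 3 * N) / (2 * N^2 - 5 * N + 4) := congrArg (·.2.1) h
  rw [eq_div_iff (denom_snd_pos N).ne'] at hx₁
  exact hN2 (by linarith)

lemma ne_zero_of_eq_one_or_eq_solution (hN : 1 ≤ N) (h23 : 2 * N - 3 ≠ 0)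
    {p : ℝ × ℝ × ℝ} (hp : p = (1, 1, -1/4) ∨ p = solution N) : p.1 ≠ 0 ∧ p.2.1 ≠ 0 := by
  rcases hp with rfl | rfl
  · norm_num
  · have hnum : 2 * N^2 - 3 * N ≠ 0 := by
      rw [show 2 * N^2 - 3 * N = N * (2 * N - 3) by ring]
      exact mul_ne_zero (by positivity) h23
    exact ⟨div_ne_zero (numer_fst_pos hN).ne' (denom_fst_ne_zero h23),
      div_ne_zero hnum (denom_snd_pos N).ne'⟩

end EinsteinCn

/-- For n ≥ 3, the real solutions (x₀, x₁, c) of the Einstein system for C(n)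
with x₀ ≠ 0 and x₁ ≠ 0 are exactly the two (distinct) stated triples. -/
theorem einstein_Cn_solutions (n : ℕ) (hn : 3 ≤ n) :
    ((1, 1, -1/4) : ℝ × ℝ × ℝ) ≠
      ((4 * (n : ℝ)^3 - 20 * (n : ℝ)^2 + 33 * (n : ℝ) - 16)
          / (4 * (n : ℝ)^3 - 16 * (n : ℝ)^2 + 23 * (n : ℝ) - 12),
       (2 * (n : ℝ)^2 - 3 * (n : ℝ)) / (2 * (n : ℝ)^2 - 5 * (n : ℝ) + 4),
       (-4 * (n : ℝ)^3 + 20 * (n : ℝ)^2 - 33 * (n : ℝ) + 16)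
          / (4 * (4 * (n : ℝ)^3 - 16 * (n : ℝ)^2 + 23 * (n : ℝ) - 12))) ∧
    ∀ x₀ x₁ c : ℝ,
      (x₀ ≠ 0 ∧ x₁ ≠ 0 ∧
        c = -x₀ / 4 ∧
        (1/4) * ((1 / (n : ℝ)) * x₁^2 - 1) = c * (1 - 1 / (n : ℝ)) * x₁ ∧
        -x₀ / (4 * ((n : ℝ) - 1)) + ((2 * (n : ℝ) - 1) / (4 * ((n : ℝ) - 1))) * x₁
          = 2 * c + 1)
      ↔ ((x₀, x₁, c) = (1, 1, -1/4) ∨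
         (x₀, x₁, c) =
          ((4 * (n : ℝ)^3 - 20 * (n : ℝ)^2 + 33 * (n : ℝ) - 16)
              / (4 * (n : ℝ)^3 - 16 * (n : ℝ)^2 + 23 * (n : ℝ) - 12),
           (2 * (n : ℝ)^2 - 3 * (n : ℝ)) / (2 * (n : ℝ)^2 - 5 * (n : ℝ) + 4),
           (-4 * (n : ℝ)^3 + 20 * (n : ℝ)^2 - 33 * (n : ℝ) + 16)
              / (4 * (4 * (n : ℝ)^3 - 16 * (n : ℝ)^2 + 23 * (n : ℝ) - 12)))) := by
  have hN : (3 : ℝ) ≤ n := by exact_mod_cast hn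
  have h23 : 2 * (n : ℝ) - 3 ≠ 0 := by linarith
  refine ⟨EinsteinCn.one_ne_solution (by linarith), fun x₀ x₁ c => ?_⟩
  change x₀ ≠ 0 ∧ x₁ ≠ 0 ∧ EinsteinCn.System n x₀ x₁ c ↔ _ ∨ (x₀, x₁, c) = EinsteinCn.solution n
  rw [EinsteinCn.system_iff (by positivity) (by linarith) h23]
  refine ⟨fun h => h.2.2, fun h => ?_⟩
  obtain ⟨hx₀, hx₁⟩ := EinsteinCn.ne_zero_of_eq_one_or_eq_solution (by linarith) h23 h
  exact ⟨hx₀, hx₁, h⟩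
end

section
/- Let m ≥ 2 and n ≥ 1 be integers with m ≠ n and m ≠ n + 1. Then the Einstein system for D(m,n) admits at least two distinct real solutions (x₁, x₂, c) with x₁ ≠ 0 and x₂ ≠ 0. -/
/-!
The Killing form itself, `(x₁, x₂, c) = (1, 1, -1/4)`, is always a solution. Clearing denominators,
the equations become polynomial; eliminating `c` and `x₂` leaves a quartic in `x₁` which vanishes
at the Killing solution `x₁ = 1`, hence splits off a cubic factor. That cubic takes the values
`-4 (m-1)² (2(m-n)-1)` at `0` and `4 (m-n) (2n+1)` at `1`, and for integers `m ≠ n` the numbers `m - n`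
and `2(m - n) - 1` have the same sign, so by the intermediate value theorem it has a root
`x₁ ∈ (0, 1)`, which yields a second solution.
-/

open Set

theorem Int.mul_two_mul_sub_one_pos {k : ℤ} (hk : k ≠ 0) : 0 < k * (2 * k - 1) := by
  rcases hk.lt_or_gt with h | h <;> nlinarith

def IsEinsteinSolution (m n : ℝ) (p : ℝ × ℝ × ℝ) : Prop :=
  p.1 ≠ 0 ∧ p.2.1 ≠ 0 ∧
    (1/4) * ((n / (m - 1)) * p.1^2 - 1) = p.2.2 * (1 - n / (m - 1)) * p.1 ∧
    (1/4) * ((m / (n + 1)) * p.2.1^2 - 1) = p.2.2 * (1 - m / (n + 1)) * p.2.1 ∧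
    ((2 * m - 1) / (4 * (m - n - 1))) * p.1 - ((2 * n + 1) / (4 * (m - n - 1))) * p.2.1
      = 2 * p.2.2 + 1

section Real

variable {m n : ℝ}

theorem isEinsteinSolution_of_cleared {x₁ x₂ c : ℝ} (hm : m - 1 ≠ 0) (hn : n + 1 ≠ 0)
    (hd : m - n - 1 ≠ 0) (h₁ : x₁ ≠ 0) (h₂ : x₂ ≠ 0)
    (e₁ : n * x₁ ^ 2 - (m - 1) = 4 * c * (m - n - 1) * x₁)
    (e₂ : m * x₂ ^ 2 - (n + 1) = -(4 * c * (m - n - 1) * x₂))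
    (e₃ : (2 * m - 1) * x₁ - (2 * n + 1) * x₂ - 4 * (m - n - 1) = 8 * (m - n - 1) * c) :
    IsEinsteinSolution m n (x₁, x₂, c) := by
  refine ⟨h₁, h₂, ?_, ?_, ?_⟩
  · field_simp
    linear_combination e₁
  · field_simp
    linear_combination e₂
  · field_simp
    linear_combination e₃

theorem isEinsteinSolution_killing (hd : m - n - 1 ≠ 0) : IsEinsteinSolution m n (1, 1, -1/4) := by
  refine ⟨one_ne_zero, one_ne_zero, by ring, by ring, ?_⟩
  field_simp
  ring

def einsteinCubic (m n r : ℝ) : ℝ :=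
  (8*m^3 - 8*m^2 - 16*m^2*n + 2*m + 12*m*n + 16*m*n^2 - 2*n - 8*n^2 - 8*n^3) * r^3
    + (-24*m^3 + 40*m^2 + 48*m^2*n - 14*m - 44*m*n - 32*m*n^2 + 6*n + 16*n^2 + 8*n^3) * r^2
    + (24*m^3 - 52*m^2 - 40*m^2*n + 32*m + 56*m*n + 16*m*n^2 - 4 - 16*n - 16*n^2) * r
    + (-8*m^3 + 20*m^2 + 8*m^2*n - 16*m - 16*m*n + 4 + 8*n)

theorem continuous_einsteinCubic : Continuous (einsteinCubic m n) := by
  unfold einsteinCubic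
  fun_prop

theorem einsteinCubic_zero : einsteinCubic m n 0 = -4 * (m - 1) ^ 2 * (2 * (m - n) - 1) := by
  unfold einsteinCubic
  ring

theorem einsteinCubic_one : einsteinCubic m n 1 = 4 * (m - n) * (2 * n + 1) := by
  unfold einsteinCubic
  ring

theorem exists_einsteinCubic_eq_zero (hm : m - 1 ≠ 0) (hn : 0 < 2 * n + 1)
    (hmn : 0 < (m - n) * (2 * (m - n) - 1)) :
    ∃ r ∈ Ioo (0 : ℝ) 1, einsteinCubic m n r = 0 := by
  -- multiplying by `m - n` makes the sign change go from negative to positive in both cases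
  have hmn' : m - n ≠ 0 := left_ne_zero_of_mul hmn.ne'
  have h₀ : (m - n) * einsteinCubic m n 0 < 0 := by
    rw [einsteinCubic_zero]
    nlinarith [mul_pos (sq_pos_of_ne_zero hm) hmn]
  have h₁ : 0 < (m - n) * einsteinCubic m n 1 := by
    rw [einsteinCubic_one]
    nlinarith [sq_pos_of_ne_zero hmn']
  obtain ⟨r, hr, hr0⟩ := intermediate_value_Ioo zero_le_one
    (continuous_const.mul continuous_einsteinCubic).continuousOn ⟨h₀, h₁⟩
  exact ⟨r, hr, (mul_eq_zero.mp hr0).resolve_left hmn'⟩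

theorem exists_isEinsteinSolution_of_einsteinCubic_eq_zero {r : ℝ} (hm : m - 1 ≠ 0)
    (hn : n + 1 ≠ 0) (hn' : 2 * n + 1 ≠ 0) (hd : m - n - 1 ≠ 0) (hr : r ≠ 0)
    (hC : einsteinCubic m n r = 0) :
    ∃ x₂ c, IsEinsteinSolution m n (r, x₂, c) := by
  -- the first and third equations force `x₂`, then the third one forces `c`
  obtain ⟨x₂, hx₂⟩ : ∃ x₂ : ℝ,
      (2 * n + 1) * r * x₂ = (2 * m - 2 * n - 1) * r ^ 2 - 4 * (m - n - 1) * r + 2 * (m - 1) :=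
    ⟨((2 * m - 2 * n - 1) * r ^ 2 - 4 * (m - n - 1) * r + 2 * (m - 1)) / ((2 * n + 1) * r), by
      field_simp⟩
  obtain ⟨c, hc⟩ : ∃ c : ℝ,
      (2 * m - 1) * r - (2 * n + 1) * x₂ - 4 * (m - n - 1) = 8 * (m - n - 1) * c :=
    ⟨((2 * m - 1) * r - (2 * n + 1) * x₂ - 4 * (m - n - 1)) / (8 * (m - n - 1)), by field_simp⟩
  have hquartic : ((2 * n + 1) * r) ^ 2 * ((2 * m - 2 * n - 1) * x₂ ^ 2 + (2 * m - 1) * r * x₂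
      - 4 * (m - n - 1) * x₂ - 2 * (n + 1)) = 0 := by
    unfold einsteinCubic at hC
    linear_combination ((2 * m - 2 * n - 1) * ((2 * n + 1) * r * x₂ + (2 * m - 2 * n - 1) * r ^ 2
        - 4 * (m - n - 1) * r + 2 * (m - 1)) + (2 * m - 1) * (2 * n + 1) * r ^ 2
        - 4 * (m - n - 1) * (2 * n + 1) * r) * hx₂ + (r - 1) * hC
  have hx₂c : (2 * m - 2 * n - 1) * x₂ ^ 2 + (2 * m - 1) * r * x₂
      - 4 * (m - n - 1) * x₂ - 2 * (n + 1) = 0 :=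
    (mul_eq_zero.mp hquartic).resolve_left (by positivity)
  have hx₂0 : x₂ ≠ 0 := by
    rintro rfl
    exact hn (by linear_combination -hx₂c / 2)
  exact ⟨x₂, c, isEinsteinSolution_of_cleared hm hn hd hr hx₂0
    (by linear_combination r / 2 * hc + hx₂ / 2)
    (by linear_combination hx₂c / 2 - x₂ / 2 * hc) hc⟩

end Real

theorem einstein_Dmn_two_solutions_general (m n : ℕ) (hm : 2 ≤ m)
    (hmn : m ≠ n) (hmn1 : m ≠ n + 1) :
    ∃ s t : ℝ × ℝ × ℝ, s ≠ t ∧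
      (∀ p ∈ ({s, t} : Set (ℝ × ℝ × ℝ)),
        p.1 ≠ 0 ∧ p.2.1 ≠ 0 ∧
        (1/4) * (((n : ℝ) / ((m : ℝ) - 1)) * p.1^2 - 1)
          = p.2.2 * (1 - (n : ℝ) / ((m : ℝ) - 1)) * p.1 ∧
        (1/4) * (((m : ℝ) / ((n : ℝ) + 1)) * p.2.1^2 - 1)
          = p.2.2 * (1 - (m : ℝ) / ((n : ℝ) + 1)) * p.2.1 ∧
        ((2 * (m : ℝ) - 1) / (4 * ((m : ℝ) - (n : ℝ) - 1))) * p.1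
          - ((2 * (n : ℝ) + 1) / (4 * ((m : ℝ) - (n : ℝ) - 1))) * p.2.1
          = 2 * p.2.2 + 1) := by
  have hm1 : (m : ℝ) - 1 ≠ 0 := by
    have : (2 : ℝ) ≤ m := by exact_mod_cast hm
    linarith
  have hd : (m : ℝ) - n - 1 ≠ 0 := by
    rw [sub_sub, sub_ne_zero]
    exact_mod_cast hmn1
  have hsign : 0 < ((m : ℝ) - n) * (2 * ((m : ℝ) - n) - 1) := by
    exact_mod_cast Int.mul_two_mul_sub_one_pos (sub_ne_zero.mpr (Nat.cast_injective.ne hmn))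
  obtain ⟨r, ⟨hr0, hr1⟩, hr⟩ := exists_einsteinCubic_eq_zero hm1 (by positivity) hsign
  obtain ⟨x₂, c, hsol⟩ := exists_isEinsteinSolution_of_einsteinCubic_eq_zero hm1
    (by positivity) (by positivity) hd hr0.ne' hr
  refine ⟨(1, 1, -1/4), (r, x₂, c), fun h => hr1.ne (congrArg Prod.fst h).symm, ?_⟩
  rintro p (rfl | rfl)
  · exact isEinsteinSolution_killing hd
  · exact hsol

/-- For m ≥ 2, n ≥ 1 with m ≠ n and m ≠ n + 1, the Einstein system for D(m,n)
admits at least two distinct real solutions (x₁, x₂, c) with x₁ ≠ 0 and x₂ ≠ 0. -/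
theorem einstein_Dmn_two_solutions (m n : ℕ) (hm : 2 ≤ m) (hn : 1 ≤ n)
    (hmn : m ≠ n) (hmn1 : m ≠ n + 1) :
    ∃ s t : ℝ × ℝ × ℝ, s ≠ t ∧
      (∀ p ∈ ({s, t} : Set (ℝ × ℝ × ℝ)),
        p.1 ≠ 0 ∧ p.2.1 ≠ 0 ∧
        (1/4) * (((n : ℝ) / ((m : ℝ) - 1)) * p.1^2 - 1)
          = p.2.2 * (1 - (n : ℝ) / ((m : ℝ) - 1)) * p.1 ∧
        (1/4) * (((m : ℝ) / ((n : ℝ) + 1)) * p.2.1^2 - 1)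
          = p.2.2 * (1 - (m : ℝ) / ((n : ℝ) + 1)) * p.2.1 ∧
        ((2 * (m : ℝ) - 1) / (4 * ((m : ℝ) - (n : ℝ) - 1))) * p.1
          - ((2 * (n : ℝ) + 1) / (4 * ((m : ℝ) - (n : ℝ) - 1))) * p.2.1
          = 2 * p.2.2 + 1) :=
  einstein_Dmn_two_solutions_general m n hm hmn hmn1
end

section
/- Let n ≥ 2 be an integer. The set of real solutions (x₁, x₂, c) of the Einstein system for D(n+1,n) is exactly the four-element set {(1, 1, 0), (−1, −1, 0), (√2·n/√(2n²+2n+1), √2·(n+1)/√(2n²+2n+1), −√2·(2n+1)/(8n·√(2n²+2n+1))), (−√2·n/√(2n²+2n+1), −√2·(n+1)/√(2n²+2n+1), √2·(2n+1)/(8n·√(2n²+2n+1)))}. -/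
/-! Eliminating `c` by (iii) turns (i) and (ii) into two quadratics in `x₁, x₂`. Their resultant
factors as `(p - 1) ((2n² + 2n + 1) p - 2n(n + 1))` in `p = x₁ x₂`: the first factor gives the
solutions `x₁ = x₂ = ±1`, the second forces `x₂ = (n + 1) x₁ / n` and fixes `x₁²`. -/

namespace EinsteinDn1n

variable {a x₁ x₂ c : ℝ}

/-- The Einstein system for `D(n+1,n)`, with the real parameter `a` in place of `n`. -/
def IsSolution (a x₁ x₂ c : ℝ) : Prop :=
  (1/4) * (x₁^2 - 1) = c * x₁ ∧
  (1/4) * (x₂^2 - 1) = -(a / (a + 1)) * c * x₂ ∧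
  ((2 * a + 1) / (8 * a)) * (x₁ - x₂) = c

theorem isSolution_iff_quadratics (ha : a ≠ 0) (ha' : a + 1 ≠ 0) :
    IsSolution a x₁ x₂ c ↔
      (x₁^2 - (2*a + 1) * (x₁ * x₂) + 2*a = 0 ∧ x₂^2 + (2*a + 1) * (x₁ * x₂) - 2*a - 2 = 0) ∧
        c = (2*a + 1) / (8*a) * (x₁ - x₂) := by
  unfold IsSolution
  constructor
  · rintro ⟨h₁, h₂, rfl⟩
    field_simp at h₁ h₂
    exact ⟨⟨by linear_combination -h₁ / 4, by linear_combination h₂ / 4⟩, rfl⟩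
  · rintro ⟨⟨hA, hB⟩, rfl⟩
    refine ⟨?_, ?_, rfl⟩ <;> field_simp
    · linear_combination -4 * hA
    · linear_combination 4 * hB

theorem quadratics_iff_cases (ha : a ≠ 0) :
    (x₁^2 - (2*a + 1) * (x₁ * x₂) + 2*a = 0 ∧ x₂^2 + (2*a + 1) * (x₁ * x₂) - 2*a - 2 = 0) ↔
      (x₂ = x₁ ∧ x₁^2 = 1) ∨
        (x₂ = (a + 1) / a * x₁ ∧ x₁^2 = 2 * a^2 / (2 * a^2 + 2 * a + 1)) := by
  have hD : 0 < 2 * a^2 + 2 * a + 1 := by nlinarith [sq_nonneg (a + 1)]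
  constructor
  · rintro ⟨hA, hB⟩
    have key : (x₁ * x₂ - 1) * ((2 * a^2 + 2 * a + 1) * (x₁ * x₂) - 2 * a * (a + 1)) = 0 := by
      linear_combination (x₁^2 / 2) * hB + ((2*a + 2 - (2*a + 1) * (x₁ * x₂)) / 2) * hA
    rcases mul_eq_zero.mp key with hp | hp
    · have hx₁ : x₁^2 = 1 := by linear_combination hA + (2*a + 1) * hp
      exact Or.inl ⟨by linear_combination x₁ * hp - x₂ * hx₁, hx₁⟩
    · have hx₁ : (2 * a^2 + 2 * a + 1) * x₁^2 = 2 * a^2 := by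
        linear_combination (2 * a^2 + 2 * a + 1) * hA + (2*a + 1) * hp
      have hx₁0 : x₁ ≠ 0 := by
        rintro rfl
        exact ha (by simpa using hx₁.symm)
      refine Or.inr ⟨?_, by rw [eq_div_iff hD.ne']; linear_combination hx₁⟩
      field_simp
      refine mul_left_cancel₀ (mul_ne_zero hx₁0 hD.ne') ?_
      linear_combination a * hp - (a + 1) * hx₁
  · rintro (⟨rfl, hx₁⟩ | ⟨rfl, hx₁⟩)
    · exact ⟨by linear_combination (-2 * a) * hx₁, by linear_combination (2*a + 2) * hx₁⟩
    · rw [eq_div_iff hD.ne'] at hx₁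
      constructor <;> field_simp
      · linear_combination -hx₁
      · linear_combination (a + 1) * hx₁

theorem sq_eq_two_mul_sq_div_iff :
    x₁^2 = 2 * a^2 / (2 * a^2 + 2 * a + 1) ↔
      x₁ = √2 * a / √(2 * a^2 + 2 * a + 1) ∨ x₁ = -(√2 * a / √(2 * a^2 + 2 * a + 1)) := by
  have hD : 0 ≤ 2 * a^2 + 2 * a + 1 := by nlinarith [sq_nonneg (a + 1)]
  rw [← sq_eq_sq_iff_eq_or_eq_neg, div_pow, mul_pow, Real.sq_sqrt zero_le_two, Real.sq_sqrt hD]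

theorem isSolution_iff (ha : 0 < a) :
    IsSolution a x₁ x₂ c ↔
      ((x₁, x₂, c) = (1, 1, 0) ∨ (x₁, x₂, c) = (-1, -1, 0) ∨
        (x₁, x₂, c) =
          (√2 * a / √(2 * a^2 + 2 * a + 1), √2 * (a + 1) / √(2 * a^2 + 2 * a + 1),
            -(√2 * (2 * a + 1) / (8 * a * √(2 * a^2 + 2 * a + 1)))) ∨
        (x₁, x₂, c) =
          (-(√2 * a / √(2 * a^2 + 2 * a + 1)), -(√2 * (a + 1) / √(2 * a^2 + 2 * a + 1)),
            √2 * (2 * a + 1) / (8 * a * √(2 * a^2 + 2 * a + 1)))) := by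
  have hs : 0 < √(2 * a^2 + 2 * a + 1) := by positivity
  rw [isSolution_iff_quadratics ha.ne' (by linarith), quadratics_iff_cases ha.ne', sq_eq_one_iff,
    sq_eq_two_mul_sq_div_iff]
  simp only [Prod.mk.injEq]
  set s := √(2 * a^2 + 2 * a + 1)
  have hx₂ : (a + 1) / a * (√2 * a / s) = √2 * (a + 1) / s := by field_simp
  have hc : (2 * a + 1) / (8 * a) * (√2 * a / s - √2 * (a + 1) / s) =
      -(√2 * (2 * a + 1) / (8 * a * s)) := by
    field_simp; ring
  constructor
  · rintro ⟨⟨rfl, rfl | rfl⟩ | ⟨rfl, rfl | rfl⟩, rfl⟩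
    · norm_num
    · norm_num
    · refine Or.inr (Or.inr (Or.inl ⟨rfl, hx₂, ?_⟩))
      rw [hx₂, hc]
    · refine Or.inr (Or.inr (Or.inr ⟨rfl, ?_, ?_⟩))
      · rw [mul_neg, hx₂]
      · rw [mul_neg, hx₂]
        linear_combination -hc
  · rintro (⟨rfl, rfl, rfl⟩ | ⟨rfl, rfl, rfl⟩ | ⟨rfl, rfl, rfl⟩ | ⟨rfl, rfl, rfl⟩)
    · norm_num
    · norm_num
    · exact ⟨Or.inr ⟨hx₂.symm, Or.inl rfl⟩, hc.symm⟩
    · refine ⟨Or.inr ⟨by rw [mul_neg, hx₂], Or.inr rfl⟩, ?_⟩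
      linear_combination -hc

end EinsteinDn1n

/-- For n ≥ 2, the set of real solutions (x₁, x₂, c) of the Einstein system for
D(n+1,n) is exactly the stated four-element set. -/
theorem einstein_Dn1n_solutions (n : ℕ) (hn : 2 ≤ n) :
    ∀ x₁ x₂ c : ℝ,
      ((1/4) * (x₁^2 - 1) = c * x₁ ∧
       (1/4) * (x₂^2 - 1) = -((n : ℝ) / ((n : ℝ) + 1)) * c * x₂ ∧
       ((2 * (n : ℝ) + 1) / (8 * (n : ℝ))) * (x₁ - x₂) = c)
      ↔ ((x₁, x₂, c) = (1, 1, 0) ∨ (x₁, x₂, c) = (-1, -1, 0) ∨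
         (x₁, x₂, c) =
          (Real.sqrt 2 * (n : ℝ) / Real.sqrt (2 * (n : ℝ)^2 + 2 * (n : ℝ) + 1),
           Real.sqrt 2 * ((n : ℝ) + 1) / Real.sqrt (2 * (n : ℝ)^2 + 2 * (n : ℝ) + 1),
           -(Real.sqrt 2 * (2 * (n : ℝ) + 1)
              / (8 * (n : ℝ) * Real.sqrt (2 * (n : ℝ)^2 + 2 * (n : ℝ) + 1)))) ∨
         (x₁, x₂, c) =
          (-(Real.sqrt 2 * (n : ℝ) / Real.sqrt (2 * (n : ℝ)^2 + 2 * (n : ℝ) + 1)),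
           -(Real.sqrt 2 * ((n : ℝ) + 1) / Real.sqrt (2 * (n : ℝ)^2 + 2 * (n : ℝ) + 1)),
           Real.sqrt 2 * (2 * (n : ℝ) + 1)
              / (8 * (n : ℝ) * Real.sqrt (2 * (n : ℝ)^2 + 2 * (n : ℝ) + 1)))) :=
  fun _ _ _ => EinsteinDn1n.isSolution_iff (Nat.cast_pos.mpr (by omega))
end

section
/- Let n ≥ 2 be an integer. The Einstein system for D(n+1,n) admits both a real solution (x₁, x₂, c) with c = 0 and a real solution with c ≠ 0; that is, it admits both Ricci flat and non Ricci flat Einstein metrics. -/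
/-- For n ≥ 2, the Einstein system for D(n+1,n) admits both a real solution with
c = 0 (Ricci flat) and a real solution with c ≠ 0 (non Ricci flat). -/
theorem einstein_Dn1n_flat_and_nonflat (n : ℕ) (hn : 2 ≤ n) :
    (∃ x₁ x₂ c : ℝ, c = 0 ∧
      (1/4) * (x₁^2 - 1) = c * x₁ ∧
      (1/4) * (x₂^2 - 1) = -((n : ℝ) / ((n : ℝ) + 1)) * c * x₂ ∧
      ((2 * (n : ℝ) + 1) / (8 * (n : ℝ))) * (x₁ - x₂) = c) ∧
    (∃ x₁ x₂ c : ℝ, c ≠ 0 ∧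
      (1/4) * (x₁^2 - 1) = c * x₁ ∧
      (1/4) * (x₂^2 - 1) = -((n : ℝ) / ((n : ℝ) + 1)) * c * x₂ ∧
      ((2 * (n : ℝ) + 1) / (8 * (n : ℝ))) * (x₁ - x₂) = c) := by
  have hN : (1:ℝ) ≤ (n:ℝ) := by exact_mod_cast Nat.one_le_of_lt hn
  set N : ℝ := (n : ℝ) with hNdef
  have hNpos : 0 < N := lt_of_lt_of_le one_pos hN
  constructor
  · exact ⟨1, 1, 0, rfl, by ring, by ring, by ring⟩
  · have hq : (0:ℝ) < 2 * N ^ 2 + 2 * N + 1 := by positivity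
    set d : ℝ := Real.sqrt (2 / (2 * N ^ 2 + 2 * N + 1)) with hd
    have hdpos : 0 < d := Real.sqrt_pos.mpr (by positivity)
    have hdsq : d ^ 2 = 2 / (2 * N ^ 2 + 2 * N + 1) := by
      rw [hd, Real.sq_sqrt (by positivity)]
    have hdsq' : (2 * N ^ 2 + 2 * N + 1) * d ^ 2 = 2 := by
      rw [hdsq]; field_simp
    refine ⟨-N * d, -(N + 1) * d, (2 * N + 1) / (8 * N) * d, ?_, ?_, ?_, ?_⟩
    · have : (0:ℝ) < (2 * N + 1) / (8 * N) * d := by positivity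
      exact ne_of_gt this
    · field_simp
      nlinarith [hdsq']
    · have hN1 : N + 1 ≠ 0 := by positivity
      field_simp
      nlinarith [hdsq']
    · ring
end

section
/- The set of real solutions (x₁, x₂, x₃, c) of the Einstein system for D(2,1;α) is exactly the four-element set {(1, 1, 1, 0), (−1, −1, −1, 0), (√(2/5), √(2/5), 2√(2/5), −(3/8)√(2/5)), (−√(2/5), −√(2/5), −2√(2/5), (3/8)√(2/5))}. -/
set_option maxHeartbeats 1000000 in
/-- The set of real solutions (x₁, x₂, x₃, c) of the Einstein system for D(2,1;α)
is exactly the stated four-element set. -/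
theorem einstein_D21a_solutions :
    ∀ x₁ x₂ x₃ c : ℝ,
      ((1/4) * (x₁^2 - 1) = c * x₁ ∧
       (1/4) * (x₂^2 - 1) = c * x₂ ∧
       (1/4) * (x₃^2 - 1) = -(1/2) * c * x₃ ∧
       (3/16) * (x₁ + x₂ - 2 * x₃) = c)
      ↔ ((x₁, x₂, x₃, c) = (1, 1, 1, 0) ∨
         (x₁, x₂, x₃, c) = (-1, -1, -1, 0) ∨
         (x₁, x₂, x₃, c) =
          (Real.sqrt (2/5), Real.sqrt (2/5), 2 * Real.sqrt (2/5),
            -(3/8) * Real.sqrt (2/5)) ∨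
         (x₁, x₂, x₃, c) =
          (-Real.sqrt (2/5), -Real.sqrt (2/5), -(2 * Real.sqrt (2/5)),
            (3/8) * Real.sqrt (2/5))) := by
  have hs2 : Real.sqrt (2/5) ^ 2 = 2/5 := Real.sq_sqrt (by norm_num)
  intro x₁ x₂ x₃ c
  simp only [Prod.mk.injEq]
  constructor
  · rintro ⟨h1, h2, h3, h4⟩
    have key0 : (x₁ - x₂) * (x₁ + x₂ - 4*c) = 0 := by linear_combination 4*h1 - 4*h2
    rcases mul_eq_zero.mp key0 with h12 | hB
    · have hc : c = (3/8)*(x₁ - x₃) := by linarith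
      have key : (x₁ - x₃) * (x₃ - 2*x₁) = 0 := by
        linear_combination 16*h1 - 16*h3 + (16*x₁ + 8*x₃)*hc
      rcases mul_eq_zero.mp key with h | h
      · have hc0 : c = 0 := by linarith
        have hx1 : (x₁ - 1) * (x₁ + 1) = 0 := by
          linear_combination 4*h1 + 4*x₁*hc0
        rcases mul_eq_zero.mp hx1 with h' | h'
        · exact Or.inl ⟨by linarith, by linarith, by linarith, hc0⟩
        · exact Or.inr (Or.inl ⟨by linarith, by linarith, by linarith, hc0⟩)
      · have hcx : c = -(3/8)*x₁ := by linarith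
        have hsq : x₁^2 = 2/5 := by
          linear_combination (8/5)*h1 + (8/5)*x₁*hcx
        have hfac : (x₁ - Real.sqrt (2/5)) * (x₁ + Real.sqrt (2/5)) = 0 := by
          linear_combination hsq - hs2
        rcases mul_eq_zero.mp hfac with h' | h'
        · exact Or.inr (Or.inr (Or.inl ⟨by linarith, by linarith, by linarith,
            by linarith⟩))
        · exact Or.inr (Or.inr (Or.inr ⟨by linarith, by linarith, by linarith,
            by linarith⟩))
    · exfalso
      have hc : c = -(3/2)*x₃ := by linarith
      have himp : 2*x₃^2 = -1 := by linear_combination -4*h3 + 2*x₃*hc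
      nlinarith [sq_nonneg x₃]
  · rintro (⟨e1, e2, e3, e4⟩ | ⟨e1, e2, e3, e4⟩ | ⟨e1, e2, e3, e4⟩ | ⟨e1, e2, e3, e4⟩) <;>
      subst e1 <;> subst e2 <;> subst e3 <;> subst e4
    · norm_num
    · norm_num
    · exact ⟨by linear_combination (5/8)*hs2, by linear_combination (5/8)*hs2,
        by linear_combination (5/8)*hs2, by ring⟩
    · exact ⟨by linear_combination (5/8)*hs2, by linear_combination (5/8)*hs2,
        by linear_combination (5/8)*hs2, by ring⟩
end

section
/- The Einstein system for D(2,1;α) admits both a real solution (x₁, x₂, x₃, c) with c = 0 and a real solution with c ≠ 0; that is, it admits both Ricci flat and non Ricci flat Einstein metrics. -/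
/-- The Einstein system for D(2,1;α) admits both a real solution with c = 0
(Ricci flat) and a real solution with c ≠ 0 (non Ricci flat). -/
theorem einstein_D21a_flat_and_nonflat :
    (∃ x₁ x₂ x₃ c : ℝ, c = 0 ∧
      (1/4) * (x₁^2 - 1) = c * x₁ ∧
      (1/4) * (x₂^2 - 1) = c * x₂ ∧
      (1/4) * (x₃^2 - 1) = -(1/2) * c * x₃ ∧
      (3/16) * (x₁ + x₂ - 2 * x₃) = c) ∧
    (∃ x₁ x₂ x₃ c : ℝ, c ≠ 0 ∧
      (1/4) * (x₁^2 - 1) = c * x₁ ∧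
      (1/4) * (x₂^2 - 1) = c * x₂ ∧
      (1/4) * (x₃^2 - 1) = -(1/2) * c * x₃ ∧
      (3/16) * (x₁ + x₂ - 2 * x₃) = c) := by
  constructor
  · exact ⟨1, 1, 1, 0, by norm_num⟩
  · have h10 : (Real.sqrt 10) ^ 2 = 10 := Real.sq_sqrt (by norm_num)
    have hpos : Real.sqrt 10 > 0 := Real.sqrt_pos.mpr (by norm_num)
    refine ⟨-Real.sqrt 10 / 5, -Real.sqrt 10 / 5, -2 * Real.sqrt 10 / 5,
      3 * Real.sqrt 10 / 40, ?_, ?_, ?_, ?_, ?_⟩ <;>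
      [positivity; nlinarith [h10]; nlinarith [h10]; nlinarith [h10]; ring]
end

section
/- The Einstein system for F(4) has a unique real solution (x₁, x₂, c) with x₁ ≠ 0 and x₂ ≠ 0, namely (x₁, x₂, c) = (1, 1, −1/4). -/
/-- The Einstein system for F(4) has a unique real solution (x₁, x₂, c) with
x₁ ≠ 0 and x₂ ≠ 0, namely (1, 1, −1/4). -/
theorem einstein_F4_unique :
    ∀ x₁ x₂ c : ℝ,
      (x₁ ≠ 0 ∧ x₂ ≠ 0 ∧
        (1/4) * ((2/5) * x₁^2 - 1) = (3/5) * c * x₁ ∧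
        (1/4) * (2 * x₂^2 - 1) = -c * x₂ ∧
        (7/8) * x₁ - (3/8) * x₂ = 2 * c + 1)
      ↔ (x₁, x₂, c) = (1, 1, -1/4) := by
  intro x₁ x₂ c
  constructor
  · rintro ⟨h1, h2, e1, e2, e3⟩
    have hA : 13*x₁^2 - 9*x₁*x₂ - 24*x₁ + 20 = 0 := by
      linear_combination (-80 : ℝ) * e1 + (24*x₁) * e3
    have hB : 5*x₂^2 + 7*x₁*x₂ - 8*x₂ - 4 = 0 := by
      linear_combination (16 : ℝ) * e2 + (8*x₂) * e3
    have hQ : 16*(x₁-1)^2*(104*x₁^2 - 140*x₁ + 125) = 0 := by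
      linear_combination (81*x₁^2) * hB + (128*x₁^2 + 45*x₁*x₂ - 192*x₁ + 100) * hA
    have hpos : 104*x₁^2 - 140*x₁ + 125 > 0 := by nlinarith [sq_nonneg (104*x₁ - 70)]
    have hx1 : x₁ = 1 := by
      have h := mul_eq_zero.mp hQ
      rcases h with h | h
      · have h' := mul_eq_zero.mp h
        rcases h' with h' | h'
        · norm_num at h'
        · have := pow_eq_zero_iff (n := 2) (by norm_num) |>.mp h'
          linarith [sub_eq_zero.mp this]
      · linarith
    subst hx1
    have hx2 : x₂ = 1 := by linarith [hA]
    subst hx2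
    have hc : c = -1/4 := by linarith [e3]
    simp [hc]
  · rintro h
    have h1 : x₁ = 1 := congrArg (fun p => p.1) h
    have h2 : x₂ = 1 := congrArg (fun p => p.2.1) h
    have h3 : c = -1/4 := congrArg (fun p => p.2.2) h
    subst h1; subst h2; subst h3
    norm_num
end
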